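/- arXiv:2511.21115 — 7 statements merged into one kernel-verified Lean document; each statement's English description precedes it below -/
import Mathlib

section
/- For all real numbers a and b, the following identity for the absolute-value loss holds: |a - b| - |a| = -b(1 - 2·𝟙{a ≤ 0}) + 2∫₀ᵇ (𝟙{a ≤ t} - 𝟙{a ≤ 0}) dt, where the integral is the signed (interval) integral from 0 to b and 𝟙{·} denotes the indicator function. -/
/-! The step function `t ↦ 𝟙{a ≤ t}` is the right derivative of `t ↦ (t - a)⁺`, so its integral
over `[0, b]` is `(b - a)⁺ - (-a)⁺`; the identity then follows from `2 x⁺ = |x| + x`. -/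

open MeasureTheory Set

theorem monotone_ite_le (a : ℝ) : Monotone fun t : ℝ => if a ≤ t then (1 : ℝ) else 0 := by
  intro s t hst
  dsimp only
  split_ifs <;> linarith

theorem hasDerivWithinAt_posPart_sub_Ioi (a x : ℝ) :
    HasDerivWithinAt (fun y : ℝ => (y - a)⁺) (if a ≤ x then 1 else 0) (Ioi x) x := by
  split_ifs with hx
  · refine ((hasDerivAt_id x).sub_const a).hasDerivWithinAt.congr (fun y hy => ?_) ?_
    · exact posPart_eq_self.2 (sub_nonneg.2 (hx.trans hy.le))
    · exact posPart_eq_self.2 (sub_nonneg.2 hx)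
  · push Not at hx
    refine (hasDerivWithinAt_const x _ 0).congr_of_eventuallyEq ?_
      (posPart_eq_zero.2 (sub_nonpos.2 hx.le))
    filter_upwards [eventually_nhdsWithin_of_eventually_nhds (eventually_lt_nhds hx)] with y hy
    exact posPart_eq_zero.2 (sub_nonpos.2 hy.le)

theorem integral_ite_le (a u v : ℝ) :
    ∫ t in u..v, (if a ≤ t then (1 : ℝ) else 0) = (v - a)⁺ - (u - a)⁺ :=
  intervalIntegral.integral_eq_sub_of_hasDeriv_right
    ((continuous_sub_right a).sup continuous_const).continuousOn
    (fun x _ => hasDerivWithinAt_posPart_sub_Ioi a x) (monotone_ite_le a).intervalIntegrable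

/-- Knight-type identity for the absolute-value loss: for all real `a`, `b`,
`|a - b| - |a| = -b(1 - 2·𝟙{a ≤ 0}) + 2∫₀ᵇ (𝟙{a ≤ t} - 𝟙{a ≤ 0}) dt`,
where the integral is the signed (interval) integral from `0` to `b`. -/
theorem abs_loss_knight_identity (a b : ℝ) :
    |a - b| - |a| =
      -b * (1 - 2 * (if a ≤ 0 then (1 : ℝ) else 0)) +
        2 * ∫ t in (0 : ℝ)..b,
          ((if a ≤ t then (1 : ℝ) else 0) - (if a ≤ 0 then (1 : ℝ) else 0)) := by
  rw [intervalIntegral.integral_sub (monotone_ite_le a).intervalIntegrable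
      intervalIntegrable_const, integral_ite_le, intervalIntegral.integral_const, smul_eq_mul,
    zero_sub, sub_zero]
  have hb := abs_add_eq_two_nsmul_posPart (b - a)
  have ha := abs_add_eq_two_nsmul_posPart (-a)
  rw [abs_sub_comm] at hb
  rw [abs_neg] at ha
  simp only [nsmul_eq_mul, Nat.cast_ofNat] at ha hb
  linarith
end

section
/- Let ε be an integrable real-valued random variable with cumulative distribution function F(t) = P(ε ≤ t). Then for every real number b, E[|ε - b|] - E[|ε|] = b(2F(0) - 1) + 2∫₀ᵇ (F(t) - F(0)) dt, where the integral is the signed interval integral from 0 to b. -/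
open MeasureTheory

private lemma sign_meas (a : ℝ) :
    Measurable (fun t => if a ≤ t then (1:ℝ) else -1) :=
  Measurable.ite measurableSet_Ici measurable_const measurable_const

private lemma sign_ii (a c d : ℝ) :
    IntervalIntegrable (fun t => if a ≤ t then (1:ℝ) else -1) volume c d := by
  have : IntegrableOn (fun t => if a ≤ t then (1:ℝ) else -1) (Set.uIcc c d) volume := by
    apply Integrable.mono' (g := fun _ => (1:ℝ))
    · exact integrableOn_const isCompact_uIcc.measure_lt_top.ne
    · exact (sign_meas a).aestronglyMeasurable.restrict
    · filter_upwards with t; split <;> simp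
  exact this.intervalIntegrable

private lemma key_le (a c d : ℝ) (hcd : c ≤ d) :
    ∫ t in c..d, (if a ≤ t then (1:ℝ) else -1) = |d - a| - |c - a| := by
  have h1 : ∀ c d : ℝ, c ≤ d → a ≤ c →
      ∫ t in c..d, (if a ≤ t then (1:ℝ) else -1) = d - c := by
    intro c d hcd hac
    rw [intervalIntegral.integral_congr (g := fun _ => (1:ℝ))
      (fun t ht => by
        rw [Set.uIcc_of_le hcd] at ht
        simp [hac.trans ht.1])]
    simp [hcd]
  have h2 : ∀ c d : ℝ, c ≤ d → d ≤ a →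
      ∫ t in c..d, (if a ≤ t then (1:ℝ) else -1) = -(d - c) := by
    intro c d hcd hda
    have : ∫ t in c..d, (if a ≤ t then (1:ℝ) else -1) = ∫ t in c..d, (-1:ℝ) := by
      apply intervalIntegral.integral_congr_ae
      have h0 : ∀ᵐ t : ℝ ∂volume, t ≠ a := by
        rw [ae_iff]
        simp [measure_singleton a]
      filter_upwards [h0] with t hta ht
      rw [Set.uIoc_of_le hcd] at ht
      have : ¬ a ≤ t := by
        intro h
        exact hta (le_antisymm (ht.2.trans hda) h)
      simp [this]
    rw [this]; simp [hcd]
  rcases le_or_gt a c with h | h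
  · rw [h1 c d hcd h, abs_of_nonneg (by linarith), abs_of_nonneg (by linarith)]; ring
  rcases le_or_gt d a with h' | h'
  · rw [h2 c d hcd h', abs_of_nonpos (by linarith), abs_of_nonpos (by linarith)]; ring
  · have := intervalIntegral.integral_add_adjacent_intervals
      (sign_ii a c a) (sign_ii a a d)
    rw [← this, h2 c a h.le le_rfl, h1 a d h'.le le_rfl,
      abs_of_nonneg (by linarith), abs_of_nonpos (by linarith)]
    ring

private lemma pointwise (a b : ℝ) :
    ∫ t in (0:ℝ)..b, (if a ≤ t then (1:ℝ) else -1) = |a - b| - |a| := by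
  rcases le_total 0 b with hb | hb
  · rw [key_le a 0 b hb, abs_sub_comm b a]; simp
  · rw [intervalIntegral.integral_symm, key_le a b 0 hb, abs_sub_comm b a]; simp

/-- For an integrable real random variable `ε` with CDF `F(t) = P(ε ≤ t)` and any `b : ℝ`,
`E[|ε - b|] - E[|ε|] = b(2F(0) - 1) + 2∫₀ᵇ (F(t) - F(0)) dt`,
where the integral is the signed interval integral from `0` to `b`. -/
theorem expected_abs_loss_identity {Ω : Type*} [MeasurableSpace Ω]
    (μ : Measure Ω) [IsProbabilityMeasure μ]
    (ε : Ω → ℝ) (hmeas : Measurable ε) (hint : Integrable ε μ)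
    (F : ℝ → ℝ) (hF : ∀ t, F t = (μ {ω | ε ω ≤ t}).toReal) (b : ℝ) :
    (∫ ω, |ε ω - b| ∂μ) - ∫ ω, |ε ω| ∂μ =
      b * (2 * F 0 - 1) + 2 * ∫ t in (0 : ℝ)..b, (F t - F 0) := by
  -- monotonicity and interval integrability of F
  have hF_mono : Monotone F := by
    intro s t hst
    rw [hF s, hF t]
    exact ENNReal.toReal_mono (measure_ne_top μ _)
      (measure_mono (fun ω hw => le_trans hw hst))
  have hFint : IntervalIntegrable F volume 0 b := hF_mono.intervalIntegrable
  -- inner integral over ω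
  have hinner : ∀ t : ℝ, ∫ ω, (if ε ω ≤ t then (1:ℝ) else -1) ∂μ = 2 * F t - 1 := by
    intro t
    have hs : MeasurableSet {ω | ε ω ≤ t} := hmeas measurableSet_Iic
    have heq : ∀ ω, (if ε ω ≤ t then (1:ℝ) else -1) =
        Set.indicator {ω | ε ω ≤ t} (fun _ => (2:ℝ)) ω - 1 := by
      intro ω
      by_cases h : ε ω ≤ t <;> norm_num [Set.indicator, h]
    simp_rw [heq]
    rw [integral_sub _ (integrable_const 1)]
    · rw [integral_indicator_const _ hs]
      simp [hF t]
      rw [measureReal_def]; ring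
    · exact (integrable_const (2:ℝ)).indicator hs
  -- rewrite LHS as a single integral of the pointwise interval integral
  have hint1 : Integrable (fun ω => |ε ω - b|) μ := (hint.sub (integrable_const b)).abs
  have hint2 : Integrable (fun ω => |ε ω|) μ := hint.abs
  rw [← integral_sub hint1 hint2]
  have hpt : ∀ ω, |ε ω - b| - |ε ω| =
      ∫ t in (0:ℝ)..b, (if ε ω ≤ t then (1:ℝ) else -1) := fun ω => (pointwise (ε ω) b).symm
  simp_rw [hpt]
  -- Fubini
  have hsign : ∀ a : ℝ, ∫ t in (0:ℝ)..b, (if a ≤ t then (1:ℝ) else -1) =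
      (if (0:ℝ) ≤ b then (1:ℝ) else -1) • ∫ t in Set.uIoc (0:ℝ) b, (if a ≤ t then (1:ℝ) else -1) := by
    intro a
    rw [intervalIntegral.intervalIntegral_eq_integral_uIoc]
  simp_rw [hsign]
  rw [integral_smul]
  haveI : IsFiniteMeasure (volume.restrict (Set.uIoc (0:ℝ) b)) := by
    constructor
    rw [Measure.restrict_apply_univ]
    exact measure_Ioc_lt_top
  have hswap : ∫ ω, (∫ t in Set.uIoc (0:ℝ) b, (if ε ω ≤ t then (1:ℝ) else -1)) ∂μ =
      ∫ t in Set.uIoc (0:ℝ) b, (∫ ω, (if ε ω ≤ t then (1:ℝ) else -1) ∂μ) := by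
    apply integral_integral_swap
    have hmeas2 : Measurable (fun p : Ω × ℝ => if ε p.1 ≤ p.2 then (1:ℝ) else -1) := by
      apply Measurable.ite _ measurable_const measurable_const
      exact measurableSet_le (hmeas.comp measurable_fst) measurable_snd
    apply Integrable.mono' (g := fun _ => (1:ℝ)) (integrable_const 1)
      hmeas2.aestronglyMeasurable
    filter_upwards with p; split <;> simp
  rw [hswap]
  simp_rw [hinner]
  -- convert back to interval integral and compute
  have h2F : IntervalIntegrable (fun t => 2 * F t - 1) volume 0 b :=
    (hFint.const_mul 2).sub intervalIntegrable_const
  have : (if (0:ℝ) ≤ b then (1:ℝ) else -1) • ∫ t in Set.uIoc (0:ℝ) b, (2 * F t - 1) =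
      ∫ t in (0:ℝ)..b, (2 * F t - 1) := by
    rw [intervalIntegral.intervalIntegral_eq_integral_uIoc]
  rw [this, intervalIntegral.integral_sub (hFint.const_mul 2) intervalIntegrable_const,
    intervalIntegral.integral_const_mul, intervalIntegral.integral_const,
    intervalIntegral.integral_sub hFint intervalIntegrable_const,
    intervalIntegral.integral_const]
  simp
  ring
end

section
/- Let ε be an integrable real-valued random variable whose law has a density f with respect to Lebesgue measure, satisfying P(ε ≤ 0) = 1/2, and suppose there exist constants c₀ > 0 and b₀ > 0 such that f(t) ≥ 1/c₀ for almost every t ∈ [-b₀, b₀]. Then for every M̃ > 0 there exists a constant γ_{M̃} > 0 such that for all real b with |b| ≤ M̃, E[|ε - b|] - E[|ε|] ≥ γ_{M̃} · b². (For instance γ_{M̃} = min{1/(2c₀), b₀²/(2c₀M̃²)} works.) -/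
/-!
Since `|x - b| - |x| + b * sign x` is nonnegative everywhere and at least `|b|` for `x` between
`0` and `b / 2`, and `E[sign ε] = 0` because `ε` has median `0` and no atom at `0`, the gap
`E|ε - b| - E|ε|` is at least `|b| * P(ε ∈ [[0, b / 2]])`. The density bound makes this
probability at least `min (|b| / 2) b₀ / c₀`, which is quadratic in `b` on `|b| ≤ M`.
-/

open MeasureTheory Set

namespace Real

theorem abs_sub_sub_abs_add_mul_sign_nonneg (b x : ℝ) :
    0 ≤ |x - b| - |x| + b * sign x := by
  rcases lt_trichotomy x 0 with h | rfl | h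
  · rw [sign_of_neg h, abs_of_neg h]
    linarith [neg_abs_le (x - b)]
  · simp
  · rw [sign_of_pos h, abs_of_pos h]
    linarith [le_abs_self (x - b)]

theorem abs_le_abs_sub_sub_abs_add_mul_sign {b x : ℝ} (hx : x ∈ uIcc 0 (b / 2)) :
    |b| ≤ |x - b| - |x| + b * sign x := by
  rcases mem_uIcc.mp hx with ⟨h0, hxb⟩ | ⟨hxb, h0⟩
  · rcases h0.eq_or_lt with rfl | h
    · simp
    rw [sign_of_pos h, abs_of_pos h, abs_of_nonpos (by linarith : x - b ≤ 0),
      abs_of_pos (by linarith : 0 < b)]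
    linarith
  · rcases h0.eq_or_lt with rfl | h
    · simp
    rw [sign_of_neg h, abs_of_neg h, abs_of_nonneg (by linarith : 0 ≤ x - b),
      abs_of_neg (by linarith : b < 0)]
    linarith

theorem sign_eq_indicator_sub_indicator (x : ℝ) :
    sign x = (Ioi 0).indicator 1 x - (Iio 0).indicator 1 x := by
  rcases lt_trichotomy x 0 with hx | rfl | hx
  · simp [sign_of_neg hx, hx, hx.not_gt]
  · simp
  · simp [sign_of_pos hx, hx, hx.not_gt]

end Real

section FiniteMeasure

variable {ν : Measure ℝ} [IsFiniteMeasure ν]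

theorem integrable_sign : Integrable Real.sign ν := by
  simp_rw [funext Real.sign_eq_indicator_sub_indicator]
  exact ((integrable_const 1).indicator measurableSet_Ioi).sub
    ((integrable_const 1).indicator measurableSet_Iio)

theorem integral_sign : ∫ x, Real.sign x ∂ν = ν.real (Ioi 0) - ν.real (Iio 0) := by
  simp_rw [Real.sign_eq_indicator_sub_indicator]
  rw [integral_sub ((integrable_const 1).indicator measurableSet_Ioi)
      ((integrable_const 1).indicator measurableSet_Iio),
    integral_indicator_one measurableSet_Ioi, integral_indicator_one measurableSet_Iio]

theorem abs_mul_measureReal_uIcc_le_integral_abs_sub_sub_integral_abs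
    (hν : Integrable id ν) (hsign : ∫ x, Real.sign x ∂ν = 0) (b : ℝ) :
    |b| * ν.real (uIcc 0 (b / 2)) ≤ ∫ x, |x - b| ∂ν - ∫ x, |x| ∂ν := by
  have hsub : Integrable (fun x => |x - b|) ν := (hν.sub (integrable_const b)).abs
  have habs : Integrable (fun x => |x|) ν := hν.abs
  have hgap : Integrable (fun x => |x - b| - |x|) ν := hsub.sub habs
  calc |b| * ν.real (uIcc 0 (b / 2))
      = ∫ x, (uIcc 0 (b / 2)).indicator (fun _ => |b|) x ∂ν := by
        rw [integral_indicator_const _ measurableSet_uIcc, smul_eq_mul, mul_comm]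
    _ ≤ ∫ x, (|x - b| - |x| + b * Real.sign x) ∂ν :=
        integral_mono ((integrable_const _).indicator measurableSet_uIcc)
          (hgap.add (integrable_sign.const_mul b))
          (indicator_le' (fun _ hx => Real.abs_le_abs_sub_sub_abs_add_mul_sign hx)
            (fun x _ => Real.abs_sub_sub_abs_add_mul_sign_nonneg b x))
    _ = ∫ x, |x - b| ∂ν - ∫ x, |x| ∂ν := by
        rw [integral_add hgap (integrable_sign.const_mul b), integral_sub hsub habs,
          integral_const_mul, hsign, mul_zero, add_zero]

end FiniteMeasure

theorem integral_sign_eq_zero {ν : Measure ℝ} [IsProbabilityMeasure ν]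
    (hmed : ν.real (Iic 0) = 1 / 2) (h0 : ν {0} = 0) : ∫ x, Real.sign x ∂ν = 0 := by
  rw [integral_sign, ← Iic_sdiff_right, measureReal_sdiff_null (by simp [measureReal_def, h0]),
    ← compl_Iic, measureReal_compl measurableSet_Iic, probReal_univ, hmed]
  norm_num

theorem mul_measure_le_withDensity_apply {α : Type*} [MeasurableSpace α] {μ : Measure α}
    {g : α → ENNReal} {c : ENNReal} {s : Set α} (hs : MeasurableSet s)
    (hc : ∀ᵐ x ∂μ.restrict s, c ≤ g x) : c * μ s ≤ μ.withDensity g s := by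
  rw [withDensity_apply _ hs, ← setLIntegral_const]
  exact lintegral_mono_ae hc

theorem volume_uIcc_inter_Icc {b r : ℝ} (hr : 0 ≤ r) :
    volume (uIcc 0 (b / 2) ∩ Icc (-r) r) = ENNReal.ofReal (min (|b| / 2) r) := by
  rw [uIcc, Icc_inter_Icc, Real.volume_Icc, abs_eq_max_neg]
  congr 1
  simp only [min_def, max_def]
  split_ifs <;> linarith

theorem ofReal_le_withDensity_uIcc {f : ℝ → ℝ} {c r : ℝ} (hr : 0 ≤ r)
    (hlow : ∀ᵐ t ∂(volume.restrict (Icc (-r) r)), 1 / c ≤ f t) (b : ℝ) :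
    ENNReal.ofReal (min (|b| / 2) r / c) ≤
      volume.withDensity (fun t => ENNReal.ofReal (f t)) (uIcc 0 (b / 2)) := by
  calc ENNReal.ofReal (min (|b| / 2) r / c)
      = ENNReal.ofReal (1 / c) * volume (uIcc 0 (b / 2) ∩ Icc (-r) r) := by
        rw [volume_uIcc_inter_Icc hr, ← ENNReal.ofReal_mul' (by positivity), one_div_mul_eq_div]
    _ ≤ volume.withDensity (fun t => ENNReal.ofReal (f t)) (uIcc 0 (b / 2) ∩ Icc (-r) r) := by
        refine mul_measure_le_withDensity_apply (measurableSet_uIcc.inter measurableSet_Icc) ?_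
        filter_upwards [ae_restrict_of_ae_restrict_of_subset inter_subset_right hlow] with t ht
        exact ENNReal.ofReal_le_ofReal ht
    _ ≤ _ := measure_mono inter_subset_left

theorem min_mul_sq_le_abs_mul_min {M r b : ℝ} (hM : 0 < M) (hr : 0 ≤ r) (hb : |b| ≤ M) :
    min (1 / 2) (r / M) * b ^ 2 ≤ |b| * min (|b| / 2) r := by
  rw [← sq_abs]
  rcases le_total (|b| / 2) r with h | h
  · rw [min_eq_left h]
    nlinarith [min_le_left (1 / 2 : ℝ) (r / M), sq_nonneg |b|]
  · rw [min_eq_right h]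
    have : r / M * |b| ^ 2 ≤ r * |b| := by
      rw [div_mul_eq_mul_div, div_le_iff₀ hM]
      nlinarith [abs_nonneg b, mul_nonneg hr (abs_nonneg b)]
    nlinarith [min_le_right (1 / 2 : ℝ) (r / M), sq_nonneg |b|]

/-- Quadratic growth of the expected absolute deviation around the median: if `ε` is an
integrable real random variable whose law has density `f` w.r.t. Lebesgue measure, with
`P(ε ≤ 0) = 1/2` and `f(t) ≥ 1/c₀` for a.e. `t ∈ [-b₀, b₀]`, then for every `M̃ > 0` there is
`γ > 0` such that `E[|ε - b|] - E[|ε|] ≥ γ b²` whenever `|b| ≤ M̃`. -/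
theorem expected_abs_dev_quadratic_growth {Ω : Type*} [MeasurableSpace Ω]
    (μ : Measure Ω) [IsProbabilityMeasure μ]
    (ε : Ω → ℝ) (hmeas : Measurable ε) (hint : Integrable ε μ)
    (f : ℝ → ℝ)
    (hdens : Measure.map ε μ = volume.withDensity fun t => ENNReal.ofReal (f t))
    (hmed : μ {ω | ε ω ≤ 0} = 1 / 2)
    (c₀ b₀ : ℝ) (hc₀ : 0 < c₀) (hb₀ : 0 < b₀)
    (hlow : ∀ᵐ t ∂(volume.restrict (Set.Icc (-b₀) b₀)), 1 / c₀ ≤ f t) :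
    ∀ M : ℝ, 0 < M → ∃ γ : ℝ, 0 < γ ∧ ∀ b : ℝ, |b| ≤ M →
      γ * b ^ 2 ≤ (∫ ω, |ε ω - b| ∂μ) - ∫ ω, |ε ω| ∂μ := by
  set ν := μ.map ε with hν
  have : IsProbabilityMeasure ν := Measure.isProbabilityMeasure_map hmeas.aemeasurable
  have hIic : ν.real (Iic 0) = 1 / 2 := by
    rw [measureReal_def, hν, Measure.map_apply hmeas measurableSet_Iic]
    simp [preimage, hmed]
  have hsign : ∫ x, Real.sign x ∂ν = 0 := integral_sign_eq_zero hIic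
    (hdens ▸ withDensity_absolutelyContinuous _ _ Real.volume_singleton)
  have hintν : Integrable id ν :=
    (integrable_map_measure aestronglyMeasurable_id hmeas.aemeasurable).mpr hint
  have htransfer (g : ℝ → ℝ) (hg : Continuous g) : ∫ ω, g (ε ω) ∂μ = ∫ x, g x ∂ν :=
    (integral_map hmeas.aemeasurable hg.aestronglyMeasurable).symm
  intro M hM
  refine ⟨min (1 / 2) (b₀ / M) / c₀, by positivity, fun b hb => ?_⟩
  have hmass : min (|b| / 2) b₀ / c₀ ≤ ν.real (uIcc 0 (b / 2)) := by
    rw [measureReal_def, ← ENNReal.ofReal_le_iff_le_toReal (measure_ne_top _ _), hdens]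
    exact ofReal_le_withDensity_uIcc hb₀.le hlow b
  rw [htransfer (|· - b|) (by fun_prop), htransfer (|·|) continuous_abs]
  calc min (1 / 2) (b₀ / M) / c₀ * b ^ 2
      ≤ |b| * min (|b| / 2) b₀ / c₀ := by
        rw [div_mul_eq_mul_div]
        exact div_le_div_of_nonneg_right (min_mul_sq_le_abs_mul_min hM hb₀.le hb) hc₀.le
    _ ≤ |b| * ν.real (uIcc 0 (b / 2)) := by
        rw [mul_div_assoc]
        exact mul_le_mul_of_nonneg_left hmass (abs_nonneg b)
    _ ≤ _ := abs_mul_measureReal_uIcc_le_integral_abs_sub_sub_integral_abs hintν hsign b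
end

section
/- For all real numbers R and δ with 0 < δ ≤ R, the following identity holds: ∫₀^δ √(log(R/ε)) dε = δ·√(log(R/δ)) + R·∫_{√(log(R/δ))}^{∞} e^{-t²} dt. -/
/-!
With `f ε = √(log (R / ε))`, the function
`F x = x f(x) + R ∫_{f(x)}^∞ e^{-t²} dt` is a primitive of `f` on `(0, R)`: differentiating,
the two terms containing `f'` cancel because `R e^{-f(x)²} = x`. As `x → 0⁺` we have
`x f(x) → 0` and `f(x) → ∞`, so `F x → 0`, and the identity is
`∫₀^δ f = F δ - F(0⁺)`.
Since `f ≥ 0`, the improper integral converges automatically.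
-/

open MeasureTheory Real Set Filter intervalIntegral
open scoped Topology

theorem intervalIntegrable_deriv_of_nonneg_of_tendsto {g g' : ℝ → ℝ} {a b ga gb : ℝ}
    (hab : a < b) (hderiv : ∀ x ∈ Ioo a b, HasDerivAt g (g' x) x)
    (hpos : ∀ x ∈ Ioo a b, 0 ≤ g' x) (ha : Tendsto g (𝓝[>] a) (𝓝 ga))
    (hb : Tendsto g (𝓝[<] b) (𝓝 gb)) : IntervalIntegrable g' volume a b := by
  classical
  set G : ℝ → ℝ := Function.update (Function.update g a ga) b gb
  have hGderiv : ∀ x ∈ Ioo a b, HasDerivAt G (g' x) x := fun x hx =>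
    (hderiv x hx).congr_of_eventuallyEq <| by
      filter_upwards [Ioo_mem_nhds hx.1 hx.2] with y hy
      simp only [G]
      rw [Function.update_of_ne hy.2.ne, Function.update_of_ne hy.1.ne']
  have hGcont : ContinuousOn G (Icc a b) := by
    rw [continuousOn_update_iff, continuousOn_update_iff, Icc_sdiff_right, Ico_sdiff_left]
    refine ⟨⟨fun x hx => (hderiv x hx).continuousAt.continuousWithinAt, fun _ =>
      ha.mono_left (nhdsWithin_mono _ Ioo_subset_Ioi_self)⟩, fun _ => ?_⟩
    refine (hb.congr' ?_).mono_left (nhdsWithin_mono _ Ico_subset_Iio_self)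
    filter_upwards [Ioo_mem_nhdsLT hab] with x hx using (Function.update_of_ne hx.1.ne' _ _).symm
  exact (intervalIntegrable_iff_integrableOn_Ioc_of_le hab.le).2
    (integrableOn_deriv_of_nonneg hGcont hGderiv hpos)

theorem hasDerivAt_integral_Ioi {E : Type*} [NormedAddCommGroup E] [NormedSpace ℝ E]
    [CompleteSpace E] {f : ℝ → E} (hf : Integrable f) (hcont : Continuous f) (s : ℝ) :
    HasDerivAt (fun s => ∫ t in Ioi s, f t) (-f s) s := by
  have hsplit :
      (fun s => ∫ t in Ioi s, f t) = fun s => (∫ t in Ioi 0, f t) - ∫ t in 0..s, f t := by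
    ext s
    rw [eq_sub_iff_add_eq', integral_interval_add_Ioi hf.integrableOn hf.integrableOn]
  rw [hsplit]
  exact (integral_hasDerivAt_right hf.intervalIntegrable
    hcont.stronglyMeasurable.stronglyMeasurableAtFilter hcont.continuousAt).const_sub _

noncomputable def gaussianTail (s : ℝ) : ℝ :=
  ∫ t in Ioi s, exp (-t ^ 2)

theorem integrable_exp_neg_sq : Integrable fun t : ℝ => exp (-t ^ 2) := by
  simpa using integrable_exp_neg_mul_sq one_pos

theorem hasDerivAt_gaussianTail (s : ℝ) : HasDerivAt gaussianTail (-exp (-s ^ 2)) s :=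
  hasDerivAt_integral_Ioi integrable_exp_neg_sq (by fun_prop) s

theorem tendsto_gaussianTail_atTop : Tendsto gaussianTail atTop (𝓝 0) :=
  tendsto_integral_Ioi_zero tendsto_id

section

variable {R : ℝ}

theorem tendsto_sqrt_log_div_nhdsGT_zero (hR : 0 < R) :
    Tendsto (fun x => √(log (R / x))) (𝓝[>] 0) atTop := by
  have hdiv : Tendsto (fun x : ℝ => R / x) (𝓝[>] 0) atTop := by
    simpa only [div_eq_mul_inv] using tendsto_inv_nhdsGT_zero.const_mul_atTop hR
  exact tendsto_sqrt_atTop.comp (tendsto_log_atTop.comp hdiv)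

theorem mul_sqrt_log_div_le (hR : 0 ≤ R) {x : ℝ} (hx : 0 < x) :
    x * √(log (R / x)) ≤ √(R * x) :=
  calc x * √(log (R / x)) ≤ x * √(R / x) := by
        gcongr; exact log_le_self (div_nonneg hR hx.le)
    _ = √(R * x) := by
        rw [show R * x = x ^ 2 * (R / x) by field_simp, sqrt_mul (sq_nonneg x), sqrt_sq hx.le]

theorem tendsto_mul_sqrt_log_div_nhdsGT_zero (hR : 0 ≤ R) :
    Tendsto (fun x => x * √(log (R / x))) (𝓝[>] 0) (𝓝 0) := by
  have hsqrt : Tendsto (fun x => √(R * x)) (𝓝[>] 0) (𝓝 0) := by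
    simpa using ((continuous_const.mul continuous_id).sqrt.tendsto (0 : ℝ)).mono_left
      nhdsWithin_le_nhds
  refine squeeze_zero' ?_ ?_ hsqrt
  · filter_upwards [self_mem_nhdsWithin] with x hx using mul_nonneg (le_of_lt hx) (sqrt_nonneg _)
  · filter_upwards [self_mem_nhdsWithin] with x hx using mul_sqrt_log_div_le hR hx

noncomputable def entropyPrimitive (R x : ℝ) : ℝ :=
  x * √(log (R / x)) + R * gaussianTail √(log (R / x))

theorem hasDerivAt_entropyPrimitive {x : ℝ} (hx : 0 < x) (hxR : x < R) :
    HasDerivAt (entropyPrimitive R) √(log (R / x)) x := by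
  have hRx : 0 < R / x := div_pos (hx.trans hxR) hx
  have hlog : 0 < log (R / x) := log_pos ((one_lt_div hx).2 hxR)
  have hf : HasDerivAt (fun ε => √(log (R / ε))) (deriv (fun ε => √(log (R / ε))) x) x :=
    (((differentiableAt_const R).div differentiableAt_id hx.ne').log hRx.ne').sqrt
      hlog.ne' |>.hasDerivAt
  have hexp : exp (-√(log (R / x)) ^ 2) = x / R := by
    rw [sq_sqrt hlog.le, exp_neg, exp_log hRx, inv_div]
  refine (((hasDerivAt_id x).mul hf).add
    (((hasDerivAt_gaussianTail _).comp x hf).const_mul R)).congr_deriv ?_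
  have hR : R ≠ 0 := (hx.trans hxR).ne'
  rw [hexp, id]
  field_simp
  ring

theorem tendsto_entropyPrimitive_nhdsGT_zero (hR : 0 < R) :
    Tendsto (entropyPrimitive R) (𝓝[>] 0) (𝓝 0) := by
  unfold entropyPrimitive
  simpa using (tendsto_mul_sqrt_log_div_nhdsGT_zero hR.le).add
    ((tendsto_gaussianTail_atTop.comp (tendsto_sqrt_log_div_nhdsGT_zero hR)).const_mul R)

theorem continuousAt_entropyPrimitive (hR : R ≠ 0) {x : ℝ} (hx : x ≠ 0) :
    ContinuousAt (entropyPrimitive R) x := by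
  have hf : ContinuousAt (fun ε => √(log (R / ε))) x :=
    ((continuousAt_const.div continuousAt_id hx).log (div_ne_zero hR hx)).sqrt
  exact (continuousAt_id.mul hf).add
    (((hasDerivAt_gaussianTail _).continuousAt.comp hf).const_mul R)

end

/-- Entropy-integral identity: for `0 < δ ≤ R`,
`∫₀^δ √(log(R/ε)) dε = δ√(log(R/δ)) + R ∫_{√(log(R/δ))}^∞ e^{-t²} dt`. -/
theorem entropy_integral_identity (R δ : ℝ) (hδ : 0 < δ) (hδR : δ ≤ R) :
    ∫ ε in (0 : ℝ)..δ, Real.sqrt (Real.log (R / ε)) =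
      δ * Real.sqrt (Real.log (R / δ)) +
        R * ∫ t in Set.Ioi (Real.sqrt (Real.log (R / δ))), Real.exp (-t ^ 2) := by
  have hR : 0 < R := hδ.trans_le hδR
  have hderiv : ∀ x ∈ Ioo 0 δ, HasDerivAt (entropyPrimitive R) √(log (R / x)) x :=
    fun x hx => hasDerivAt_entropyPrimitive hx.1 (hx.2.trans_le hδR)
  have hlim₀ := tendsto_entropyPrimitive_nhdsGT_zero hR
  have hlimδ : Tendsto (entropyPrimitive R) (𝓝[<] δ) (𝓝 (entropyPrimitive R δ)) :=
    (continuousAt_entropyPrimitive hR.ne' hδ.ne').tendsto.mono_left nhdsWithin_le_nhds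
  have hint := intervalIntegrable_deriv_of_nonneg_of_tendsto hδ hderiv
    (fun _ _ => sqrt_nonneg _) hlim₀ hlimδ
  rw [integral_eq_sub_of_hasDerivAt_of_tendsto hδ hderiv hint hlim₀ hlimδ, sub_zero]
  rfl
end

section
/- For all real numbers R and δ with 0 < δ ≤ R·e^{-1/2}, one has ∫₀^δ √(log(R/ε)) dε ≤ 2δ·√(log(R/δ)). -/
open MeasureTheory Real

/-!
Write `L = log (R/δ)`. For `ε ≤ δ` we have `log (R/ε) = L + log (δ/ε)`, and the tangent line of
the concave function `√·` at `L` gives `√(log (R/ε)) ≤ √L + log (δ/ε) / (2√L)`. Since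
`∫₀^δ log (δ/ε) dε = δ`, integrating yields `∫₀^δ √(log (R/ε)) dε ≤ δ√L + δ/(2√L)`, and `L ≥ 1/2`
makes the second term at most `δ√L`.
-/

theorem Real.sqrt_add_le_sqrt_add_div {a u : ℝ} (ha : 0 < a) (hu : -(2 * a) ≤ u) :
    √(a + u) ≤ √a + u / (2 * √a) := by
  have hs : 0 < √a := sqrt_pos.2 ha
  have hsq : √a ^ 2 = a := sq_sqrt ha.le
  rw [sqrt_le_iff]
  constructor
  · have : √a + u / (2 * √a) = (2 * a + u) / (2 * √a) := by
      field_simp; rw [hsq]; ring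
    rw [this]
    exact div_nonneg (by linarith) (by positivity)
  · have : (√a + u / (2 * √a)) ^ 2 = a + u + (u / (2 * √a)) ^ 2 := by
      field_simp; rw [hsq]; ring
    rw [this]
    nlinarith [sq_nonneg (u / (2 * √a))]

theorem integral_log_sub_log (b : ℝ) : ∫ x in (0 : ℝ)..b, (log b - log x) = b := by
  rw [intervalIntegral.integral_sub intervalIntegrable_const
      intervalIntegral.intervalIntegrable_log', integral_log, intervalIntegral.integral_const]
  simp

theorem sqrt_log_div_le_of_le {R δ ε : ℝ} (hL : 0 < log (R / δ)) (hε : 0 < ε) (hεδ : ε ≤ δ) :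
    √(log (R / ε)) ≤ √(log (R / δ)) + (log δ - log ε) / (2 * √(log (R / δ))) := by
  have hδ : 0 < δ := hε.trans_le hεδ
  have hR : R ≠ 0 := by rintro rfl; simp at hL
  have hsplit : log (R / ε) = log (R / δ) + (log δ - log ε) := by
    rw [log_div hR hε.ne', log_div hR hδ.ne']; ring
  rw [hsplit]
  exact sqrt_add_le_sqrt_add_div hL (by linarith [log_le_log hε hεδ])

theorem integral_sqrt_log_div_le {R δ : ℝ} (hδ : 0 < δ) (hL : 0 < log (R / δ)) :
    ∫ ε in (0 : ℝ)..δ, √(log (R / ε)) ≤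
      δ * √(log (R / δ)) + δ / (2 * √(log (R / δ))) := by
  set s := √(log (R / δ))
  set g : ℝ → ℝ := fun ε ↦ s + (log δ - log ε) / (2 * s)
  have hgap : IntervalIntegrable (fun ε ↦ (log δ - log ε) / (2 * s)) volume 0 δ :=
    (intervalIntegrable_const.sub intervalIntegral.intervalIntegrable_log').div_const _
  have hg : IntervalIntegrable g volume 0 δ := intervalIntegrable_const.add hgap
  have hle : ∀ ε ∈ Set.Ioc 0 δ, √(log (R / ε)) ≤ g ε := fun ε hε ↦
    sqrt_log_div_le_of_le hL hε.1 hε.2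
  have hf : IntervalIntegrable (fun ε ↦ √(log (R / ε))) volume 0 δ := by
    refine hg.mono_fun' (measurable_const.div measurable_id).log.sqrt.aestronglyMeasurable ?_
    rw [Set.uIoc_of_le hδ.le]
    filter_upwards [ae_restrict_mem measurableSet_Ioc] with ε hε
    rw [norm_of_nonneg (sqrt_nonneg _)]
    exact hle ε hε
  calc ∫ ε in (0 : ℝ)..δ, √(log (R / ε))
      ≤ ∫ ε in (0 : ℝ)..δ, g ε :=
        intervalIntegral.integral_mono_on_of_le_Ioo hδ.le hf hg fun ε hε ↦
          hle ε (Set.Ioo_subset_Ioc_self hε)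
    _ = δ * s + δ / (2 * s) := by
        simp only [g]
        rw [intervalIntegral.integral_add intervalIntegrable_const hgap,
          intervalIntegral.integral_div, integral_log_sub_log, intervalIntegral.integral_const]
        simp [smul_eq_mul]

/-- Entropy integral bound: for `0 < δ ≤ R e^{-1/2}`,
`∫₀^δ √(log(R/ε)) dε ≤ 2δ√(log(R/δ))`. -/
theorem entropy_integral_bound (R δ : ℝ) (hδ : 0 < δ)
    (hδR : δ ≤ R * Real.exp (-(1 / 2))) :
    ∫ ε in (0 : ℝ)..δ, Real.sqrt (Real.log (R / ε)) ≤
      2 * δ * Real.sqrt (Real.log (R / δ)) := by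
  have hRδ : exp (1 / 2) ≤ R / δ := by
    rw [le_div_iff₀ hδ, ← le_div_iff₀' (exp_pos _), div_eq_mul_inv, ← exp_neg]
    exact hδR
  have hL : 1 / 2 ≤ log (R / δ) := (le_log_iff_exp_le ((exp_pos _).trans_le hRδ)).2 hRδ
  have hs : 0 < √(log (R / δ)) := sqrt_pos.2 (by linarith)
  have hsq : √(log (R / δ)) ^ 2 = log (R / δ) := sq_sqrt (by linarith)
  have htail : δ / (2 * √(log (R / δ))) ≤ δ * √(log (R / δ)) := by
    rw [div_le_iff₀ (by positivity)]
    nlinarith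
  linarith [integral_sqrt_log_div_le hδ (by linarith : 0 < log (R / δ))]
end

section
/- Let p ∈ ℕ, let K ⊆ ℝ^p be a nonempty compact set, let R : ℝ^p → ℝ be continuous, let J : ℝ^p → ℝ be lower semicontinuous and bounded, let λ ≥ 0, let I be a finite set of coordinate indices in {1,…,p} with positive weights γᵢ > 0 for i ∈ I, and let f : ℝ → ℝ be concave with f(0) = 0 and f(y) → 1 as y → +∞. For σ > 0 define Φ_σ : ℝ^p → ℝ ∪ {+∞} by Φ_σ(x) = R(x) + λJ(x) + Σ_{i∈I} γᵢ f(|xᵢ|/σ) for x ∈ K and Φ_σ(x) = +∞ for x ∉ K, and define Φ₀(x) = R(x) + λJ(x) + Σ_{i∈I} γᵢ·𝟙{xᵢ ≠ 0} for x ∈ K and +∞ otherwise. Then for every sequence σ_k of positive reals strictly decreasing to 0, inf_{x ∈ ℝ^p} Φ_{σ_k}(x) → inf_{x ∈ ℝ^p} Φ₀(x) as k → ∞. -/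
open scoped Classical
open Filter Set Topology

/-!
The smoothed objectives increase pointwise as `σ ↓ 0` (since `f` is monotone, being concave with a
finite limit at `+∞`) and converge pointwise to the ℓ₀ objective, which they never exceed. Hence
their infima over `K` increase to some `L ≤ inf Φ₀`. Conversely, the sublevel sets
`{x ∈ K | Φ_{σ_k}(x) ≤ L}` are closed (lower semicontinuity), nonempty (minima are attained on the
compact `K`) and decreasing, so by compactness they share a point `x`; letting `k → ∞` gives
`Φ₀(x) ≤ L`.
-/

theorem ConcaveOn.monotone_of_tendsto_atTop {f : ℝ → ℝ} (hf : ConcaveOn ℝ univ f) {c : ℝ}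
    (hlim : Tendsto f atTop (𝓝 c)) : Monotone f := by
  intro a b hab
  by_contra! hba
  have hab' : a < b := hab.lt_of_ne (by rintro rfl; exact lt_irrefl _ hba)
  set s := (f b - f a) / (b - a)
  have hs : s < 0 := div_neg_of_neg_of_pos (by linarith) (by linarith)
  have hle : ∀ t, b < t → f t ≤ f b + s * (t - b) := fun t ht => by
    have := hf.slope_anti_adjacent (mem_univ a) (mem_univ t) hab' ht
    rw [div_le_iff₀ (by linarith)] at this
    linarith
  have hbot : Tendsto (fun t => f b + s * (t - b)) atTop atBot :=
    tendsto_atBot_add_const_left _ _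
      ((tendsto_atTop_add_const_right _ _ tendsto_id).const_mul_atTop_of_neg hs)
  exact not_tendsto_nhds_of_tendsto_atBot
    (tendsto_atBot_mono' _ ((eventually_gt_atTop b).mono hle) hbot) c hlim

section MonotoneLimit

variable {X : Type*} [TopologicalSpace X] {K : Set X} {g : ℕ → X → ℝ} {g₀ : X → ℝ}

theorem exists_mem_forall_le_iSup_biInf (hK : IsCompact K) (hne : K.Nonempty)
    (hg : ∀ k, LowerSemicontinuous (g k)) (hmono : Monotone g) :
    ∃ x ∈ K, ∀ k, (g k x : EReal) ≤ ⨆ m, ⨅ y ∈ K, (g m y : EReal) := by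
  set L := ⨆ m, ⨅ y ∈ K, (g m y : EReal)
  have hclosed : ∀ k, IsClosed {x | (g k x : EReal) ≤ L} := fun k =>
    (continuous_coe_real_ereal.comp_lowerSemicontinuous (hg k)
      EReal.coe_strictMono.monotone).isClosed_preimage L
  obtain ⟨x, hxK, hx⟩ := hK.inter_iInter_nonempty _ hclosed fun u => by
    obtain ⟨x, hxK, hxmin⟩ := ((hg (u.sup id)).lowerSemicontinuousOn K).exists_isMinOn hne hK
    refine ⟨x, hxK, mem_iInter₂.2 fun k hk => ?_⟩
    calc (g k x : EReal) ≤ g (u.sup id) x :=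
          EReal.coe_le_coe_iff.2 (hmono (Finset.le_sup (f := id) hk) x)
      _ ≤ ⨅ y ∈ K, (g (u.sup id) y : EReal) :=
          le_iInf₂ fun y hy => EReal.coe_le_coe_iff.2 (hxmin hy)
      _ ≤ L := le_iSup (fun m => ⨅ y ∈ K, (g m y : EReal)) _
  exact ⟨x, hxK, fun k => mem_iInter.1 hx k⟩

theorem tendsto_biInf_of_monotone_of_lowerSemicontinuous (hK : IsCompact K)
    (hg : ∀ k, LowerSemicontinuous (g k)) (hmono : Monotone g)
    (hlim : ∀ x ∈ K, Tendsto (g · x) atTop (𝓝 (g₀ x))) :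
    Tendsto (fun k => ⨅ x ∈ K, (g k x : EReal)) atTop (𝓝 (⨅ x ∈ K, (g₀ x : EReal))) := by
  have hinf_mono : Monotone fun k => ⨅ x ∈ K, (g k x : EReal) := fun k l hkl =>
    iInf₂_mono fun x _ => EReal.coe_le_coe_iff.2 (hmono hkl x)
  convert tendsto_atTop_iSup hinf_mono using 2
  refine le_antisymm ?_ (iSup_le fun k => iInf₂_mono fun x hx => EReal.coe_le_coe_iff.2 <|
    Monotone.ge_of_tendsto (fun _ _ h => hmono h x) (hlim x hx) k)
  rcases K.eq_empty_or_nonempty with rfl | hne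
  · simp
  obtain ⟨x, hxK, hx⟩ := exists_mem_forall_le_iSup_biInf hK hne hg hmono
  exact (biInf_le _ hxK).trans <|
    le_of_tendsto' ((continuous_coe_real_ereal.tendsto _).comp (hlim x hxK)) hx

end MonotoneLimit

section Penalty

variable {ι : Type*} (I : Finset ι) (γ : ι → ℝ)

noncomputable def l0Penalty (x : ι → ℝ) : ℝ :=
  ∑ i ∈ I, γ i * if x i ≠ 0 then 1 else 0

noncomputable def smoothedPenalty (f : ℝ → ℝ) (σ : ℝ) (x : ι → ℝ) : ℝ :=
  ∑ i ∈ I, γ i * f (|x i| / σ)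

variable {I γ} {f : ℝ → ℝ}

theorem continuous_smoothedPenalty (hf : Continuous f) (σ : ℝ) :
    Continuous (smoothedPenalty I γ f σ) :=
  continuous_finsetSum _ fun i _ =>
    continuous_const.mul (hf.comp ((continuous_apply (A := fun _ : ι => ℝ) i).abs.div_const σ))

theorem smoothedPenalty_le_of_le (hγ : ∀ i ∈ I, 0 ≤ γ i) (hf : Monotone f) {σ τ : ℝ}
    (hσ : 0 < σ) (hστ : σ ≤ τ) (x : ι → ℝ) :
    smoothedPenalty I γ f τ x ≤ smoothedPenalty I γ f σ x :=
  Finset.sum_le_sum fun i hi => mul_le_mul_of_nonneg_left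
    (hf (div_le_div_of_nonneg_left (abs_nonneg _) hσ hστ)) (hγ i hi)

theorem tendsto_apply_abs_div_nhdsGT_zero (hf0 : f 0 = 0) (hflim : Tendsto f atTop (𝓝 1))
    (t : ℝ) : Tendsto (fun σ => f (|t| / σ)) (𝓝[>] 0) (𝓝 (if t ≠ 0 then 1 else 0)) := by
  by_cases ht : t = 0
  · simp [ht, hf0]
  simp only [ne_eq, ht, not_false_eq_true, if_true, div_eq_mul_inv]
  exact hflim.comp (tendsto_inv_nhdsGT_zero.const_mul_atTop (abs_pos.2 ht))

theorem tendsto_smoothedPenalty_nhdsGT_zero (hf0 : f 0 = 0) (hflim : Tendsto f atTop (𝓝 1))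
    (x : ι → ℝ) :
    Tendsto (fun σ => smoothedPenalty I γ f σ x) (𝓝[>] 0) (𝓝 (l0Penalty I γ x)) :=
  tendsto_finsetSum _ fun i _ =>
    (tendsto_apply_abs_div_nhdsGT_zero hf0 hflim (x i)).const_mul (γ i)

end Penalty

theorem inf_smoothed_tendsto_inf_l0_general (p : ℕ)
    (K : Set (Fin p → ℝ)) (hKc : IsCompact K)
    (R J : (Fin p → ℝ) → ℝ) (hR : Continuous R)
    (hJ : LowerSemicontinuous J)
    (lam : ℝ) (hlam : 0 ≤ lam)
    (I : Finset (Fin p)) (γ : Fin p → ℝ) (hγ : ∀ i ∈ I, 0 < γ i)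
    (f : ℝ → ℝ) (hf : ConcaveOn ℝ Set.univ f) (hf0 : f 0 = 0)
    (hflim : Tendsto f atTop (nhds 1))
    (σ : ℕ → ℝ) (hσpos : ∀ k, 0 < σ k) (hσanti : StrictAnti σ)
    (hσlim : Tendsto σ atTop (nhds 0))
    (Φ : ℕ → (Fin p → ℝ) → EReal)
    (hΦ : ∀ k x, Φ k x = if x ∈ K then
      (((R x + lam * J x + ∑ i ∈ I, γ i * f (|x i| / σ k)) : ℝ) : EReal) else ⊤)
    (Φ₀ : (Fin p → ℝ) → EReal)
    (hΦ₀ : ∀ x, Φ₀ x = if x ∈ K then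
      (((R x + lam * J x + ∑ i ∈ I, γ i * (if x i ≠ 0 then (1 : ℝ) else 0)) : ℝ) : EReal)
      else ⊤) :
    Tendsto (fun k => ⨅ x, Φ k x) atTop (nhds (⨅ x, Φ₀ x)) := by
  have hγ₀ : ∀ i ∈ I, 0 ≤ γ i := fun i hi => (hγ i hi).le
  have hfmono : Monotone f := hf.monotone_of_tendsto_atTop hflim
  have hfcont : Continuous f := continuousOn_univ.1 (hf.continuousOn isOpen_univ)
  have hσ : Tendsto σ atTop (𝓝[>] 0) := tendsto_nhdsWithin_iff.2 ⟨hσlim, .of_forall hσpos⟩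
  have hlamJ : LowerSemicontinuous fun x => lam * J x :=
    (continuous_const_mul lam).comp_lowerSemicontinuous hJ (monotone_mul_left_of_nonneg hlam)
  have hinf : ∀ k, ⨅ x, Φ k x =
      ⨅ x ∈ K, ((R x + lam * J x + smoothedPenalty I γ f (σ k) x : ℝ) : EReal) := fun k => by
    simp_rw [hΦ, iInf_eq_if]; rfl
  have hinf₀ : ⨅ x, Φ₀ x = ⨅ x ∈ K, ((R x + lam * J x + l0Penalty I γ x : ℝ) : EReal) := by
    simp_rw [hΦ₀, iInf_eq_if]; rfl
  simp only [hinf, hinf₀]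
  refine tendsto_biInf_of_monotone_of_lowerSemicontinuous hKc (fun k => ?_)
    (fun k l hkl x => ?_) fun x _ => ?_
  · exact (hR.lowerSemicontinuous.add hlamJ).add
      (continuous_smoothedPenalty hfcont _).lowerSemicontinuous
  · exact add_le_add_right (smoothedPenalty_le_of_le hγ₀ hfmono (hσpos l)
      (hσanti.antitone hkl) x) _
  · exact tendsto_const_nhds.add ((tendsto_smoothedPenalty_nhdsGT_zero hf0 hflim x).comp hσ)

/-- Part 1 of Theorem 4.1: the infimum of the continuous relaxation `Φ_{σ_k}` of the
weighted-ℓ₀-penalized objective converges to the infimum of the ℓ₀-penalized objective `Φ₀`. -/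
theorem inf_smoothed_tendsto_inf_l0 (p : ℕ)
    (K : Set (Fin p → ℝ)) (hKne : K.Nonempty) (hKc : IsCompact K)
    (R J : (Fin p → ℝ) → ℝ) (hR : Continuous R)
    (hJ : LowerSemicontinuous J) (hJb : ∃ M : ℝ, ∀ x, |J x| ≤ M)
    (lam : ℝ) (hlam : 0 ≤ lam)
    (I : Finset (Fin p)) (γ : Fin p → ℝ) (hγ : ∀ i ∈ I, 0 < γ i)
    (f : ℝ → ℝ) (hf : ConcaveOn ℝ Set.univ f) (hf0 : f 0 = 0)
    (hflim : Tendsto f atTop (nhds 1))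
    (σ : ℕ → ℝ) (hσpos : ∀ k, 0 < σ k) (hσanti : StrictAnti σ)
    (hσlim : Tendsto σ atTop (nhds 0))
    (Φ : ℕ → (Fin p → ℝ) → EReal)
    (hΦ : ∀ k x, Φ k x = if x ∈ K then
      (((R x + lam * J x + ∑ i ∈ I, γ i * f (|x i| / σ k)) : ℝ) : EReal) else ⊤)
    (Φ₀ : (Fin p → ℝ) → EReal)
    (hΦ₀ : ∀ x, Φ₀ x = if x ∈ K then
      (((R x + lam * J x + ∑ i ∈ I, γ i * (if x i ≠ 0 then (1 : ℝ) else 0)) : ℝ) : EReal)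
      else ⊤) :
    Tendsto (fun k => ⨅ x, Φ k x) atTop (nhds (⨅ x, Φ₀ x)) :=
  inf_smoothed_tendsto_inf_l0_general p K hKc R J hR hJ lam hlam I γ hγ f hf hf0 hflim σ hσpos
    hσanti hσlim Φ hΦ Φ₀ hΦ₀
end

section
/- Let ι be a finite index type, G : ι → ℝ, and s ∈ ℕ. Define clip(g) = max(-1, min(1, g)) and Δ(g) = g² if |g| ≤ 1 and Δ(g) = 2|g| - 1 if |g| > 1. Let T ⊆ ι be any subset with card(T) = min(s, card(ι)) such that Δ(Gᵢ) ≥ Δ(Gⱼ) for all i ∈ T and j ∉ T (i.e., T collects indices of the s largest benefit values, ties broken arbitrarily). Define w* : ι → ℝ by w*ᵢ = clip(Gᵢ) if i ∈ T and w*ᵢ = 0 otherwise. Then: (i) w* is feasible, i.e., |w*ᵢ| ≤ 1 for all i and card{i : w*ᵢ ≠ 0} ≤ s; (ii) for every w : ι → ℝ with |wᵢ| ≤ 1 for all i and card{i : wᵢ ≠ 0} ≤ s, one has Σᵢ (w*ᵢ - Gᵢ)² ≤ Σᵢ (wᵢ - Gᵢ)²; and (iii) Σᵢ (w*ᵢ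 - Gᵢ)² = Σᵢ Gᵢ² - Σ_{i∈T} Δ(Gᵢ). -/
/-!
`g² - (w - g)²` is the decrease of the squared distance to `g` obtained by moving a coordinate
from `0` to `w`. Over `|w| ≤ 1` it is maximised by `w = clip g`, with maximum `benefit g ≥ 0`.
Hence a feasible `w` supported on `S` has squared distance at least `‖G‖² - ∑_{i ∈ S} Δ(Gᵢ)`,
and a set of at most `s` indices has total benefit at most that of `T`, which `w*` attains.
-/

open Finset

/-- Projection of a scalar onto the interval `[-1, 1]`. -/
noncomputable def clip (g : ℝ) : ℝ := max (-1) (min 1 g)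

/-- The local benefit value `Δ(g)` from Lemma 4.1. -/
noncomputable def benefit (g : ℝ) : ℝ := if |g| ≤ 1 then g ^ 2 else 2 * |g| - 1

lemma benefit_nonneg (g : ℝ) : 0 ≤ benefit g := by
  unfold benefit
  split_ifs with h
  · positivity
  · linarith [not_le.mp h]

lemma abs_clip_le_one (g : ℝ) : |clip g| ≤ 1 :=
  abs_le.mpr ⟨le_max_left _ _, max_le (by norm_num) (min_le_left _ _)⟩

lemma sq_sub_sq_clip_sub (g : ℝ) : g ^ 2 - (clip g - g) ^ 2 = benefit g := by
  unfold clip benefit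
  split_ifs with h
  · rw [min_eq_right (abs_le.mp h).2, max_eq_right (abs_le.mp h).1]; ring
  · rcases le_or_gt 0 g with hg | hg
    · rw [abs_of_nonneg hg] at h ⊢
      rw [min_eq_left (by linarith), max_eq_right (by linarith)]; ring
    · rw [abs_of_neg hg] at h ⊢
      rw [min_eq_right (by linarith), max_eq_left (by linarith)]; ring

lemma sq_sub_sq_sub_le_benefit {w : ℝ} (g : ℝ) (hw : |w| ≤ 1) :
    g ^ 2 - (w - g) ^ 2 ≤ benefit g := by
  obtain ⟨hw₁, hw₂⟩ := abs_le.mp hw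
  unfold benefit
  split_ifs with h
  · nlinarith
  · rcases le_or_gt 0 g with hg | hg
    · rw [abs_of_nonneg hg] at h ⊢; nlinarith
    · rw [abs_of_neg hg] at h ⊢; nlinarith

lemma Finset.sum_le_sum_of_card_le_of_le_threshold {ι M : Type*} [AddCommMonoid M]
    [PartialOrder M] [IsOrderedAddMonoid M] {S T : Finset ι} {b : ι → M} {c : M}
    (hc : 0 ≤ c) (hST : #S ≤ #T) (hT : ∀ i ∈ T, c ≤ b i) (hTc : ∀ j ∉ T, b j ≤ c) :
    ∑ i ∈ S, b i ≤ ∑ i ∈ T, b i := by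
  classical
  have hsdiff : ∑ i ∈ S \ T, b i ≤ ∑ i ∈ T \ S, b i :=
    calc ∑ i ∈ S \ T, b i ≤ #(S \ T) • c :=
          sum_le_card_nsmul _ _ _ fun j hj => hTc j (mem_sdiff.mp hj).2
      _ ≤ #(T \ S) • c := nsmul_le_nsmul_left hc (card_sdiff_le_card_sdiff_iff.mpr hST)
      _ ≤ ∑ i ∈ T \ S, b i := card_nsmul_le_sum _ _ _ fun i hi => hT i (mem_sdiff.mp hi).1
  rw [← sum_inter_add_sum_sdiff S T, ← sum_inter_add_sum_sdiff T S, inter_comm]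
  exact add_le_add_right hsdiff _

lemma Finset.sum_le_sum_of_card_le_of_forall_le {ι M : Type*} [AddCommMonoid M]
    [LinearOrder M] [IsOrderedAddMonoid M] {S T : Finset ι} {b : ι → M}
    (hb : ∀ i ∈ T, 0 ≤ b i) (hST : #S ≤ #T) (htop : ∀ i ∈ T, ∀ j ∉ T, b j ≤ b i) :
    ∑ i ∈ S, b i ≤ ∑ i ∈ T, b i := by
  rcases T.eq_empty_or_nonempty with rfl | hT
  · rw [card_eq_zero.mp (Nat.le_zero.mp hST)]
  · exact sum_le_sum_of_card_le_of_le_threshold (le_inf' hT b hb) hST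
      (fun i hi => inf'_le b hi) (fun j hj => le_inf' hT b fun i hi => htop i hi j hj)

lemma sum_sq_sub_eq_of_eq_zero {ι : Type*} [Fintype ι] {S : Finset ι} {w G : ι → ℝ}
    (hw : ∀ i ∉ S, w i = 0) :
    ∑ i, (w i - G i) ^ 2 = ∑ i, G i ^ 2 - ∑ i ∈ S, (G i ^ 2 - (w i - G i) ^ 2) := by
  rw [sum_subset (subset_univ S) fun i _ hi => by rw [hw i hi]; ring, sum_sub_distrib]
  ring

/-- Lemma 4.1: the Euclidean projection onto the sparse box constraint
`{w : |wᵢ| ≤ 1 for all i, card{i : wᵢ ≠ 0} ≤ s}` is obtained by clipping to `[-1,1]` the `s`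
entries with largest benefit values and zeroing out the rest. -/
theorem sparse_box_projection {ι : Type*} [Fintype ι] [DecidableEq ι]
    (G : ι → ℝ) (s : ℕ) (T : Finset ι)
    (hTcard : T.card = min s (Fintype.card ι))
    (hTtop : ∀ i ∈ T, ∀ j ∉ T, benefit (G j) ≤ benefit (G i))
    (wstar : ι → ℝ) (hwstar : ∀ i, wstar i = if i ∈ T then clip (G i) else 0) :
    ((∀ i, |wstar i| ≤ 1) ∧ {i | wstar i ≠ 0}.ncard ≤ s) ∧
    (∀ w : ι → ℝ, (∀ i, |w i| ≤ 1) → {i | w i ≠ 0}.ncard ≤ s →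
      ∑ i, (wstar i - G i) ^ 2 ≤ ∑ i, (w i - G i) ^ 2) ∧
    (∑ i, (wstar i - G i) ^ 2 = ∑ i, (G i) ^ 2 - ∑ i ∈ T, benefit (G i)) := by
  have hwstar_off : ∀ i ∉ T, wstar i = 0 := fun i hi => by rw [hwstar i, if_neg hi]
  have hvalue : ∑ i, (wstar i - G i) ^ 2 = ∑ i, G i ^ 2 - ∑ i ∈ T, benefit (G i) := by
    rw [sum_sq_sub_eq_of_eq_zero hwstar_off]
    congr 1
    exact sum_congr rfl fun i hi => by rw [hwstar i, if_pos hi, sq_sub_sq_clip_sub]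
  refine ⟨⟨fun i => ?_, ?_⟩, fun w hw hws => ?_, hvalue⟩
  · rw [hwstar i]
    split_ifs
    · exact abs_clip_le_one _
    · simp
  · calc {i | wstar i ≠ 0}.ncard ≤ (T : Set ι).ncard :=
          Set.ncard_le_ncard (fun i hi => by_contra fun h => hi (hwstar_off i h))
      _ ≤ s := by rw [Set.ncard_coe_finset, hTcard]; exact min_le_left _ _
  · set S := univ.filter fun i => w i ≠ 0
    have hST : #S ≤ #T := by
      rw [hTcard]
      refine le_min ?_ (card_le_univ S)
      simpa [S, ← Set.ncard_coe_finset] using hws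
    have hgain : ∑ i ∈ S, (G i ^ 2 - (w i - G i) ^ 2) ≤ ∑ i ∈ T, benefit (G i) :=
      (sum_le_sum fun i _ => sq_sub_sq_sub_le_benefit (G i) (hw i)).trans <|
        sum_le_sum_of_card_le_of_forall_le (fun i _ => benefit_nonneg _) hST hTtop
    rw [hvalue, sum_sq_sub_eq_of_eq_zero (S := S) fun i hi => by simpa [S] using hi]
    linarith
end
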